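/- (Error decomposition) For every t ≥ 0, the iterates satisfy d_{t+1} ≤ (1−α)^{t+1} d_0 + γ Σ_{k=0}^{t} α(1−α)^{t−k} d_k + ‖Σ_{k=0}^{t} α(1−α)^{t−k} D_k‖∞ + ‖Σ_{k=0}^{t} α(1−α)^{t−k} E_k‖∞, where d_t = ‖Q_t − Q*‖∞. -/

import Mathlib

/-!
Unrolling the affine recursion `Q_{t+1} - Q* = (1-α)(Q_t - Q*) + α(T Q_t - T Q* + D_t + E_t)`
writes `Q_{t+1} - Q*` as `(1-α)^{t+1}(Q_0 - Q*)` plus three discounted sums; the triangle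
inequality and the contraction `‖T Q_k - T Q*‖∞ ≤ γ d_k` then bound its sup norm termwise.
Since `supNorm` is Mathlib's iterated `Pi` norm, the argument runs in an arbitrary normed space.
-/

open Finset

/-- Sup norm on `ℝ^{S×A}`: `‖Q‖∞ = max_{(s,a)} |Q(s,a)|`. -/
noncomputable def supNorm {S A : Type*} [Fintype S] [Fintype A] [Nonempty S] [Nonempty A]
    (Q : S → A → ℝ) : ℝ :=
  Finset.univ.sup' Finset.univ_nonempty (fun p : S × A => |Q p.1 p.2|)

lemma supNorm_eq_norm {S A : Type*} [Fintype S] [Fintype A] [Nonempty S] [Nonempty A]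
    (Q : S → A → ℝ) : supNorm Q = ‖Q‖ := by
  apply le_antisymm
  · refine sup'_le _ _ fun p _ => ?_
    exact (norm_le_pi_norm (Q p.1) p.2).trans (norm_le_pi_norm Q p.1)
  · have hQ : ∀ s a, |Q s a| ≤ supNorm Q := fun s a =>
      le_sup' (fun p : S × A => |Q p.1 p.2|) (mem_univ (s, a))
    have h0 : 0 ≤ supNorm Q :=
      (abs_nonneg _).trans (hQ (Classical.arbitrary S) (Classical.arbitrary A))
    exact (pi_norm_le_iff_of_nonneg h0).2 fun s => (pi_norm_le_iff_of_nonneg h0).2 fun a => hQ s a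

theorem eq_pow_smul_add_sum_of_succ_eq {R M : Type*} [CommSemiring R] [AddCommMonoid M]
    [Module R M] {a b : R} {x u : ℕ → M} (h : ∀ t, x (t + 1) = a • x t + b • u t) (t : ℕ) :
    x (t + 1) = a ^ (t + 1) • x 0 + ∑ k ∈ range (t + 1), (b * a ^ (t - k)) • u k := by
  induction t with
  | zero => simp [h 0]
  | succ t ih =>
    have hshift : a • ∑ k ∈ range (t + 1), (b * a ^ (t - k)) • u k
        = ∑ k ∈ range (t + 1), (b * a ^ (t + 1 - k)) • u k := by
      rw [smul_sum]
      refine sum_congr rfl fun k hk => ?_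
      rw [smul_smul, Nat.sub_add_comm (mem_range_succ_iff.mp hk), pow_succ]
      ring_nf
    rw [h, ih, smul_add, smul_smul, ← pow_succ', hshift, sum_range_succ _ (t + 1),
      Nat.sub_self, pow_zero, mul_one, add_assoc]

theorem norm_sub_fixedPoint_le_of_relaxed_iteration {E : Type*} [SeminormedAddCommGroup E]
    [NormedSpace ℝ E] {γ α : ℝ} (hα₀ : 0 ≤ α) (hα₁ : α ≤ 1) {T : E → E}
    (hT : ∀ x y, ‖T x - T y‖ ≤ γ * ‖x - y‖) {q : E} (hq : T q = q) {e d Q : ℕ → E}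
    (hQ : ∀ t, Q (t + 1) = (1 - α) • Q t + α • (T (Q t) + e t + d t)) (t : ℕ) :
    ‖Q (t + 1) - q‖ ≤ (1 - α) ^ (t + 1) * ‖Q 0 - q‖
      + γ * ∑ k ∈ range (t + 1), α * (1 - α) ^ (t - k) * ‖Q k - q‖
      + ‖∑ k ∈ range (t + 1), (α * (1 - α) ^ (t - k)) • d k‖
      + ‖∑ k ∈ range (t + 1), (α * (1 - α) ^ (t - k)) • e k‖ := by
  set c : ℕ → ℝ := fun k => α * (1 - α) ^ (t - k)
  have hc : ∀ k, 0 ≤ c k := fun k => mul_nonneg hα₀ (pow_nonneg (by linarith) _)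
  have hstep : ∀ t, Q (t + 1) - q = (1 - α) • (Q t - q) + α • (T (Q t) - T q + d t + e t) := by
    intro t
    rw [hQ, hq]
    module
  have hunroll : Q (t + 1) - q = (1 - α) ^ (t + 1) • (Q 0 - q)
      + ∑ k ∈ range (t + 1), c k • (T (Q k) - T q)
      + ∑ k ∈ range (t + 1), c k • d k + ∑ k ∈ range (t + 1), c k • e k := by
    rw [eq_pow_smul_add_sum_of_succ_eq (x := fun t => Q t - q) hstep t]
    simp only [smul_add, sum_add_distrib, c, add_assoc]
  have hcontr : ‖∑ k ∈ range (t + 1), c k • (T (Q k) - T q)‖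
      ≤ γ * ∑ k ∈ range (t + 1), c k * ‖Q k - q‖ := by
    rw [mul_sum]
    refine (norm_sum_le _ _).trans (sum_le_sum fun k _ => ?_)
    rw [norm_smul, Real.norm_of_nonneg (hc k), mul_left_comm]
    exact mul_le_mul_of_nonneg_left (hT _ _) (hc k)
  have hinit : ‖(1 - α) ^ (t + 1) • (Q 0 - q)‖ = (1 - α) ^ (t + 1) * ‖Q 0 - q‖ := by
    rw [norm_smul, Real.norm_of_nonneg (pow_nonneg (by linarith) _)]
  rw [hunroll]
  refine norm_add₄_le.trans ?_
  rw [hinit]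
  gcongr

theorem error_decomposition_general
    {S A : Type*} [Fintype S] [Fintype A] [Nonempty S] [Nonempty A]
    (γ α : ℝ) (hα : α ∈ Set.Ioc (0 : ℝ) 1)
    (T : (S → A → ℝ) → (S → A → ℝ))
    (hT : ∀ Q₁ Q₂ : S → A → ℝ,
      supNorm (fun s a => T Q₁ s a - T Q₂ s a) ≤ γ * supNorm (fun s a => Q₁ s a - Q₂ s a))
    (Qstar : S → A → ℝ) (hQstar : T Qstar = Qstar)
    (E D : ℕ → S → A → ℝ) (Q : ℕ → S → A → ℝ)
    (hQ : ∀ t s a, Q (t + 1) s a = (1 - α) * Q t s a + α * (T (Q t) s a + E t s a + D t s a))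
    (t : ℕ) :
    supNorm (fun s a => Q (t + 1) s a - Qstar s a) ≤
      (1 - α) ^ (t + 1) * supNorm (fun s a => Q 0 s a - Qstar s a)
      + γ * ∑ k ∈ Finset.range (t + 1),
          α * (1 - α) ^ (t - k) * supNorm (fun s a => Q k s a - Qstar s a)
      + supNorm (fun s a => ∑ k ∈ Finset.range (t + 1), α * (1 - α) ^ (t - k) * D k s a)
      + supNorm (fun s a => ∑ k ∈ Finset.range (t + 1), α * (1 - α) ^ (t - k) * E k s a) := by
  have hsum : ∀ F : ℕ → S → A → ℝ,
      (fun s a => ∑ k ∈ range (t + 1), α * (1 - α) ^ (t - k) * F k s a)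
        = ∑ k ∈ range (t + 1), (α * (1 - α) ^ (t - k)) • F k := by
    intro F
    ext s a
    simp only [Finset.sum_apply, Pi.smul_apply, smul_eq_mul]
  simp only [hsum, supNorm_eq_norm]
  refine norm_sub_fixedPoint_le_of_relaxed_iteration hα.1.le hα.2
    (fun Q₁ Q₂ => ?_) hQstar (fun t => ?_) t
  · rw [← supNorm_eq_norm, ← supNorm_eq_norm]
    exact hT Q₁ Q₂
  · ext s a
    simp only [hQ, Pi.add_apply, Pi.smul_apply, smul_eq_mul]

/-- (Error decomposition)  If `T` is a `γ`-contraction with fixed point `Q*`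
and `Q_{t+1} = (1-α)Q_t + α(T(Q_t) + E_t + D_t)`, then
`d_{t+1} ≤ (1-α)^{t+1} d_0 + γ Σ_{k=0}^{t} α(1-α)^{t-k} d_k
  + ‖Σ_{k=0}^{t} α(1-α)^{t-k} D_k‖∞ + ‖Σ_{k=0}^{t} α(1-α)^{t-k} E_k‖∞`,
where `d_t = ‖Q_t - Q*‖∞`. -/
theorem error_decomposition
    {S A : Type*} [Fintype S] [Fintype A] [Nonempty S] [Nonempty A]
    (γ α : ℝ) (hγ : γ ∈ Set.Ioo (0 : ℝ) 1) (hα : α ∈ Set.Ioc (0 : ℝ) 1)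
    (T : (S → A → ℝ) → (S → A → ℝ))
    (hT : ∀ Q₁ Q₂ : S → A → ℝ,
      supNorm (fun s a => T Q₁ s a - T Q₂ s a) ≤ γ * supNorm (fun s a => Q₁ s a - Q₂ s a))
    (Qstar : S → A → ℝ) (hQstar : T Qstar = Qstar)
    (E D : ℕ → S → A → ℝ) (Q : ℕ → S → A → ℝ)
    (hQ : ∀ t s a, Q (t + 1) s a = (1 - α) * Q t s a + α * (T (Q t) s a + E t s a + D t s a))
    (t : ℕ) :
    supNorm (fun s a => Q (t + 1) s a - Qstar s a) ≤
      (1 - α) ^ (t + 1) * supNorm (fun s a => Q 0 s a - Qstar s a)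
      + γ * ∑ k ∈ Finset.range (t + 1),
          α * (1 - α) ^ (t - k) * supNorm (fun s a => Q k s a - Qstar s a)
      + supNorm (fun s a => ∑ k ∈ Finset.range (t + 1), α * (1 - α) ^ (t - k) * D k s a)
      + supNorm (fun s a => ∑ k ∈ Finset.range (t + 1), α * (1 - α) ^ (t - k) * E k s a) :=
  error_decomposition_general γ α hα T hT Qstar hQstar E D Q hQ t
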